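/- arXiv:2002.10723 — 6 statements merged into one kernel-verified Lean document; each statement's English description precedes it below -/
import Mathlib

section
/- Let (Ω,Σ) be a measurable space and G a countable group of measurable automorphisms of Ω. If M₁ and M₂ are nonzero σ-finite G-quasi-invariant ergodic measures on Ω, then M₁ and M₂ are either equivalent or mutually singular. -/
open MeasureTheory

private lemma aux_ac {Ω : Type*} [MeasurableSpace Ω] {G : Type*} [Group G] [Countable G]
    [MulAction G Ω] (hmeas : ∀ g : G, Measurable fun ω : Ω => g • ω)
    (μ ν : Measure Ω)
    (hqν : ∀ g : G, ν.map (fun ω => g • ω) ≪ ν)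
    (heμ : ∀ A : Set Ω, MeasurableSet A → (∀ g : G, (fun ω => g • ω) ⁻¹' A = A) →
      μ A = 0 ∨ μ Aᶜ = 0)
    (hns : ¬ μ ⟂ₘ ν) : μ ≪ ν := by
  refine Measure.AbsolutelyContinuous.mk (fun A hA hA0 => ?_)
  set B := ⋃ g : G, (fun ω => g • ω) ⁻¹' A with hB
  have hBm : MeasurableSet B := MeasurableSet.iUnion fun g => (hmeas g) hA
  have hBν : ν B = 0 := by
    refine measure_iUnion_null fun g => ?_
    have h := (hqν g) hA0
    rwa [Measure.map_apply (hmeas g) hA] at h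
  have hInv : ∀ h : G, (fun ω => h • ω) ⁻¹' B = B := by
    intro h
    ext ω
    simp only [hB, Set.mem_iUnion, Set.mem_preimage]
    constructor
    · rintro ⟨g, hg⟩
      exact ⟨g * h, by rwa [mul_smul]⟩
    · rintro ⟨g, hg⟩
      exact ⟨g * h⁻¹, by rwa [mul_smul, inv_smul_smul]⟩
  have hAB : A ⊆ B := by
    intro ω hω
    exact Set.mem_iUnion.2 ⟨1, by simpa using hω⟩
  rcases heμ B hBm hInv with h0 | h0
  · exact measure_mono_null hAB h0
  · exact absurd ⟨Bᶜ, hBm.compl, h0, by simpa using hBν⟩ hns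

/-- Two nonzero σ-finite quasi-invariant ergodic measures under a countable group of
measurable automorphisms are either equivalent or mutually singular. -/
theorem stmt0 {Ω : Type*} [MeasurableSpace Ω] {G : Type*} [Group G] [Countable G]
    [MulAction G Ω] (hmeas : ∀ g : G, Measurable fun ω : Ω => g • ω)
    (M₁ M₂ : Measure Ω) [SigmaFinite M₁] [SigmaFinite M₂]
    (h₁ : M₁ ≠ 0) (h₂ : M₂ ≠ 0)
    (hq₁ : ∀ g : G, M₁.map (fun ω => g • ω) ≪ M₁ ∧ M₁ ≪ M₁.map (fun ω => g • ω))
    (hq₂ : ∀ g : G, M₂.map (fun ω => g • ω) ≪ M₂ ∧ M₂ ≪ M₂.map (fun ω => g • ω))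
    (he₁ : ∀ A : Set Ω, MeasurableSet A → (∀ g : G, (fun ω => g • ω) ⁻¹' A = A) →
      M₁ A = 0 ∨ M₁ Aᶜ = 0)
    (he₂ : ∀ A : Set Ω, MeasurableSet A → (∀ g : G, (fun ω => g • ω) ⁻¹' A = A) →
      M₂ A = 0 ∨ M₂ Aᶜ = 0) :
    (M₁ ≪ M₂ ∧ M₂ ≪ M₁) ∨ M₁ ⟂ₘ M₂ := by
  by_cases hsing : M₁ ⟂ₘ M₂
  · exact Or.inr hsing
  · refine Or.inl ⟨?_, ?_⟩
    · exact aux_ac hmeas M₁ M₂ (fun g => (hq₂ g).1) he₁ hsing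
    · exact aux_ac hmeas M₂ M₁ (fun g => (hq₁ g).1) he₂
        (fun h => hsing h.symm)
end

section
/- Let L be a closed subspace of a Hilbert space E = F ⊕ ℂ (orthogonal direct sum with a one-dimensional summand spanned by a unit vector e). Write the orthogonal projection [L] onto L in block form [[a,b],[c,d]] with respect to this decomposition, and assume d ≠ 1. Then the orthogonal projection of E onto the closure of the image of L under the orthogonal projection onto F, restricted to F, equals a + b(1−d)⁻¹c. -/
open scoped ComplexInnerProductSpace

/-!
With `α = (1 - d)⁻¹ c` and `w = v + α e`, the choice of `α` makes `⟪e, P w⟫ = α = ⟪e, w⟫`.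
Then `u = P w - α e` lies in `L + ℂe` and is orthogonal to `e`, while `v - u = w - P w` is
orthogonal to both `L` and `e`; hence `u` is the orthogonal projection of `v` onto `(L + ℂe) ∩ F`.
Expanding `u` gives the block formula.
-/

namespace LinearMap.IsSymmetricProjection

variable {𝕜 E : Type*} [RCLike 𝕜] [NormedAddCommGroup E] [InnerProductSpace 𝕜 E]

open Submodule
open scoped InnerProductSpace

theorem apply_eq_of_mem_range_of_sub_mem_orthogonal {Q : E →ₗ[𝕜] E}
    (hQ : Q.IsSymmetricProjection) {u v : E} (hu : u ∈ range Q) (hvu : v - u ∈ (range Q)ᗮ) :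
    Q v = u := by
  obtain ⟨x, rfl⟩ := hu
  rwa [hQ.isSymmetric.orthogonal_range, mem_ker, map_sub, ← Module.End.mul_apply,
    hQ.isIdempotentElem.eq, sub_eq_zero] at hvu

theorem sub_apply_self_mem_orthogonal_range {P : E →ₗ[𝕜] E} (hP : P.IsSymmetricProjection)
    (w : E) : w - P w ∈ (range P)ᗮ := by
  rw [hP.isSymmetric.orthogonal_range, mem_ker, map_sub, ← Module.End.mul_apply,
    hP.isIdempotentElem.eq, sub_self]

theorem apply_eq_of_range_eq_sup_inf_orthogonal {P Q : E →ₗ[𝕜] E}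
    (hP : P.IsSymmetricProjection) (hQ : Q.IsSymmetricProjection) {e : E}
    (hQrange : range Q = (range P ⊔ (𝕜 ∙ e)) ⊓ (𝕜 ∙ e)ᗮ) {v w : E} (hv : ⟪e, v⟫_𝕜 = 0)
    (hwv : w - v ∈ 𝕜 ∙ e) (hw : ⟪e, P w⟫_𝕜 = ⟪e, w⟫_𝕜) :
    Q v = P w - (w - v) := by
  have he_perp : v - (P w - (w - v)) ∈ (𝕜 ∙ e)ᗮ := by
    rw [mem_orthogonal_singleton_iff_inner_right]
    simp only [inner_sub_right, hv, hw]
    ring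
  refine hQ.apply_eq_of_mem_range_of_sub_mem_orthogonal ?_ ?_
  · rw [hQrange]
    refine ⟨sub_mem_sup (mem_range_self P w) hwv, ?_⟩
    simpa using Submodule.sub_mem _ (mem_orthogonal_singleton_iff_inner_right.mpr hv) he_perp
  · rw [hQrange]
    refine orthogonal_le inf_le_left ?_
    rw [← inf_orthogonal]
    refine ⟨?_, he_perp⟩
    rw [show v - (P w - (w - v)) = w - P w by abel]
    exact hP.sub_apply_self_mem_orthogonal_range w

end LinearMap.IsSymmetricProjection

/-- `P` is `[L]` and `Q` the projection onto `(L + ℂe) ∩ F`; in the block decomposition,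
`a v = P v - ⟪e, P v⟫ • e`, `b 1 = P e - d • e`, `c v = ⟪e, P v⟫` and `d = ⟪e, P e⟫`. -/
theorem stmt5 {E : Type*} [NormedAddCommGroup E] [InnerProductSpace ℂ E] [CompleteSpace E]
    (e : E) (he : ‖e‖ = 1) (P Q : E →L[ℂ] E)
    (hP : IsSelfAdjoint P) (hPi : P ∘L P = P)
    (hQ : IsSelfAdjoint Q) (hQi : Q ∘L Q = Q)
    (hQrange : LinearMap.range (Q : E →ₗ[ℂ] E) = (LinearMap.range (P : E →ₗ[ℂ] E) ⊔ (ℂ ∙ e)) ⊓ (ℂ ∙ e)ᗮ)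
    (hd : ⟪e, P e⟫ ≠ 1) :
    ∀ v : E, ⟪e, v⟫ = 0 →
      Q v = (P v - ⟪e, P v⟫ • e)
        + ((1 - ⟪e, P e⟫)⁻¹ * ⟪e, P v⟫) • (P e - ⟪e, P e⟫ • e) := by
  intro v hv
  set α := (1 - ⟪e, P e⟫)⁻¹ * ⟪e, P v⟫
  have hα : ⟪e, P v⟫ + α * ⟪e, P e⟫ = α := by
    linear_combination -(mul_inv_cancel_left₀ (sub_ne_zero.mpr hd.symm) ⟪e, P v⟫)
  have hwv : v + α • e - v ∈ ℂ ∙ e := by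
    rw [add_sub_cancel_left]
    exact Submodule.smul_mem _ α (Submodule.mem_span_singleton_self e)
  have hw : ⟪e, P (v + α • e)⟫ = ⟪e, v + α • e⟫ := by
    simp [hv, he, hα]
  have hPproj := ContinuousLinearMap.isStarProjection_iff_isSymmetricProjection.mp ⟨hPi, hP⟩
  have hQproj := ContinuousLinearMap.isStarProjection_iff_isSymmetricProjection.mp ⟨hQi, hQ⟩
  have hQv := hPproj.apply_eq_of_range_eq_sup_inf_orthogonal hQproj hQrange hv hwv hw
  simp only [ContinuousLinearMap.coe_coe] at hQv
  rw [hQv, map_add, map_smul]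
  linear_combination (norm := module) hα • e
end

section
/- Let L be a closed subspace of a Hilbert space E = F ⊕ ℂe (e a unit vector) and write the orthogonal projection [L] in block form [[a,b],[c,d]] with respect to this decomposition, with d ≠ 0. Then the orthogonal projection onto L ∩ F equals a − b d⁻¹ c (as an operator on F). -/
/-!
Put `c = ⟪e, P v⟫ / ⟪e, P e⟫` and `u = v - c • e`. The vector `P u` lies in `L = range P`, and `c`
is exactly the coefficient making it orthogonal to `e`, so `P u ∈ L ∩ F`. On the other hand
`v - P u = (u - P u) + c • e` with `u - P u ⊥ L` and `e ⊥ F`, so `v - P u ⊥ L ∩ F`. Hence `P u` is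
the orthogonal projection of `v` onto `L ∩ F`; expanding `P u` in the block entries gives
`a - b d⁻¹ c`.
-/

open scoped ComplexInnerProductSpace InnerProductSpace

namespace LinearMap.IsSymmetricProjection

variable {𝕜 E : Type*} [RCLike 𝕜] [NormedAddCommGroup E] [InnerProductSpace 𝕜 E]

theorem sub_apply_mem_orthogonal_range {T : E →ₗ[𝕜] E} (hT : T.IsSymmetricProjection) (v : E) :
    v - T v ∈ (range T)ᗮ := by
  rw [hT.isSymmetric.orthogonal_range, mem_ker, map_sub, ← Module.End.mul_apply,
    hT.isIdempotentElem.eq, sub_self]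

theorem apply_eq_of_mem_range_of_sub_mem_orthogonal_s6 {T : E →ₗ[𝕜] E}
    (hT : T.IsSymmetricProjection) {v w : E} (hw : w ∈ range T) (hvw : v - w ∈ (range T)ᗮ) :
    T v = w := by
  rw [hT.isSymmetric.orthogonal_range] at hvw
  calc T v = T w + T (v - w) := by rw [← map_add, add_sub_cancel]
    _ = w := by
      rw [(LinearMap.IsIdempotentElem.mem_range_iff hT.isIdempotentElem).mp hw, mem_ker.mp hvw,
        add_zero]

theorem apply_eq_of_range_eq_inf_orthogonal_singleton {P Q : E →ₗ[𝕜] E}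
    (hP : P.IsSymmetricProjection) (hQ : Q.IsSymmetricProjection) {e : E}
    (hQrange : range Q = range P ⊓ (𝕜 ∙ e)ᗮ) (hd : ⟪e, P e⟫_𝕜 ≠ 0) (v : E) :
    Q v = P (v - (⟪e, P v⟫_𝕜 / ⟪e, P e⟫_𝕜) • e) := by
  set c := ⟪e, P v⟫_𝕜 / ⟪e, P e⟫_𝕜
  set u := v - c • e
  refine hQ.apply_eq_of_mem_range_of_sub_mem_orthogonal_s6 ?_ ?_ <;> rw [hQrange]
  · refine ⟨mem_range_self P u, Submodule.mem_orthogonal_singleton_iff_inner_right.mpr ?_⟩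
    rw [map_sub, map_smul, inner_sub_right, inner_smul_right, div_mul_cancel₀ _ hd, sub_self]
  · have hvu : v - P u = (u - P u) + c • e := by
      simp only [u]
      abel
    rw [hvu]
    refine add_mem (Submodule.orthogonal_le inf_le_left (hP.sub_apply_mem_orthogonal_range u)) ?_
    exact Submodule.orthogonal_le inf_le_right <| Submodule.le_orthogonal_orthogonal _ <|
      Submodule.smul_mem _ c (Submodule.mem_span_singleton_self e)

end LinearMap.IsSymmetricProjection

theorem stmt6_general {E : Type*} [NormedAddCommGroup E] [InnerProductSpace ℂ E] [CompleteSpace E]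
    (e : E) (P Q : E →L[ℂ] E)
    (hP : IsSelfAdjoint P) (hPi : P ∘L P = P)
    (hQ : IsSelfAdjoint Q) (hQi : Q ∘L Q = Q)
    (hQrange : LinearMap.range (Q : E →ₗ[ℂ] E) = LinearMap.range (P : E →ₗ[ℂ] E) ⊓ (ℂ ∙ e)ᗮ)
    (hd : ⟪e, P e⟫ ≠ 0) :
    ∀ v : E, ⟪e, v⟫ = 0 →
      Q v = (P v - ⟪e, P v⟫ • e)
        - ((⟪e, P e⟫)⁻¹ * ⟪e, P v⟫) • (P e - ⟪e, P e⟫ • e) := by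
  intro v _
  have hPsp := ContinuousLinearMap.isStarProjection_iff_isSymmetricProjection.mp ⟨hPi, hP⟩
  have hQsp := ContinuousLinearMap.isStarProjection_iff_isSymmetricProjection.mp ⟨hQi, hQ⟩
  have hQv := hPsp.apply_eq_of_range_eq_inf_orthogonal_singleton hQsp hQrange hd v
  have hcoef : (⟪e, P e⟫)⁻¹ * ⟪e, P v⟫ * ⟪e, P e⟫ = ⟪e, P v⟫ := by field_simp
  simp only [ContinuousLinearMap.coe_coe] at hQv
  rw [hQv, map_sub, map_smul, smul_sub, smul_smul, hcoef, div_eq_inv_mul]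
  abel

/-- Block formula for the projection onto `L ∩ F`, where `E = F ⊕ ℂe`, `F = (ℂe)ᗮ`.
`P` is the orthogonal projection onto `L`, `Q` the orthogonal projection onto `L ∩ F`,
`d = ⟪e, P e⟫ ≠ 0`. -/
theorem stmt6 {E : Type*} [NormedAddCommGroup E] [InnerProductSpace ℂ E] [CompleteSpace E]
    (e : E) (he : ‖e‖ = 1) (P Q : E →L[ℂ] E)
    (hP : IsSelfAdjoint P) (hPi : P ∘L P = P)
    (hQ : IsSelfAdjoint Q) (hQi : Q ∘L Q = Q)
    (hQrange : LinearMap.range (Q : E →ₗ[ℂ] E) = LinearMap.range (P : E →ₗ[ℂ] E) ⊓ (ℂ ∙ e)ᗮ)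
    (hd : ⟪e, P e⟫ ≠ 0) :
    ∀ v : E, ⟪e, v⟫ = 0 →
      Q v = (P v - ⟪e, P v⟫ • e)
        - ((⟪e, P e⟫)⁻¹ * ⟪e, P v⟫) • (P e - ⟪e, P e⟫ • e) :=
  stmt6_general e P Q hP hPi hQ hQi hQrange hd
end

section
/- Let E be a Hilbert space, A ⊆ X index sets with E = ℓ²(X), and for a closed subspace L ⊆ E and disjoint finite subsets X₀, X₀' ⊆ X define L_{X₀,X₀'} := (L + E_{X₀'}) ∩ E_{X∖(X₀⊔X₀')}, where E_A is the closed span of basis vectors indexed by A. Then for any partition X₀' = X₁' ⊔ X₂', one has L_{∅,X₀'} = (L_{∅,X₁'})_{∅,X₂'}. -/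
/-!
`E_A` is exactly the space of families vanishing outside `A`. Hence `E_A ⊓ E_B = E_{A ∩ B}`,
and `E_{A ∪ B} = E_A ⊔ E_B` by splitting along `E_A ⊕ E_Aᗮ`. With these, both sides of the
identity are lattice expressions in `L`, `E_{X₁'}`, `E_{X₂'}`, `E_{X₁'ᶜ}`, `E_{X₂'ᶜ}`, and they
agree by the modular law, because `E_{X₂'} ≤ E_{X₁'ᶜ}` for disjoint `X₁'`, `X₂'`.
-/

noncomputable section

variable {X : Type*} [DecidableEq X]

/-- The canonical basis vector `e_x` of `ℓ²(X)`. -/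
def basisVec (x : X) : lp (fun _ : X => ℂ) 2 := lp.single 2 x 1

/-- `E_A`: the closed linear span of the basis vectors indexed by `A`. -/
def spanE (A : Set X) : Submodule ℂ (lp (fun _ : X => ℂ) 2) :=
  (Submodule.span ℂ (basisVec '' A)).topologicalClosure

/-- The `(X₀,X₀')`-reduction `L_{X₀,X₀'} = (L + E_{X₀'}) ∩ E_{X∖(X₀⊔X₀')}` of `L`. -/
def reduction (L : Submodule ℂ (lp (fun _ : X => ℂ) 2)) (X₀ X₀' : Set X) :
    Submodule ℂ (lp (fun _ : X => ℂ) 2) :=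
  (L ⊔ spanE X₀') ⊓ spanE (X₀ ∪ X₀')ᶜ

lemma basisVec_apply (x y : X) : basisVec x y = if y = x then 1 else 0 := by
  simp only [basisVec, lp.single_apply, Pi.single_apply]

lemma smul_basisVec (x : X) (c : ℂ) : c • basisVec x = lp.single 2 x c := by
  rw [basisVec, ← lp.single_smul, smul_eq_mul, mul_one]

lemma inner_basisVec_left (x : X) (f : lp (fun _ : X => ℂ) 2) :
    inner ℂ (basisVec x) f = f x := by
  simp [basisVec, lp.inner_single_left]

lemma basisVec_mem_spanE {A : Set X} {x : X} (hx : x ∈ A) : basisVec x ∈ spanE A :=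
  Submodule.le_topologicalClosure _ (Submodule.subset_span ⟨x, hx, rfl⟩)

lemma spanE_mono {A B : Set X} (h : A ⊆ B) : spanE A ≤ spanE B :=
  Submodule.topologicalClosure_mono (Submodule.span_mono (Set.image_mono h))

lemma spanE_le_ker_evalCLM {A : Set X} {x : X} (hx : x ∉ A) :
    spanE A ≤ (lp.evalCLM ℂ (fun _ : X => ℂ) 2 x).ker := by
  refine Submodule.topologicalClosure_minimal _ ?_ (ContinuousLinearMap.isClosed_ker _)
  rw [Submodule.span_le]
  rintro _ ⟨y, hy, rfl⟩
  have hxy : x ≠ y := fun h => hx (h ▸ hy)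
  simp [lp.evalCLM, basisVec_apply, hxy]

lemma mem_spanE_iff {A : Set X} {f : lp (fun _ : X => ℂ) 2} :
    f ∈ spanE A ↔ ∀ x ∉ A, f x = 0 := by
  refine ⟨fun hf x hx => spanE_le_ker_evalCLM hx hf, fun hf => ?_⟩
  have hsingle : ∀ x, lp.single 2 x (f x) ∈ spanE A := by
    intro x
    by_cases hx : x ∈ A
    · rw [← smul_basisVec]
      exact Submodule.smul_mem _ _ (basisVec_mem_spanE hx)
    · rw [hf x hx, lp.single_zero]
      exact Submodule.zero_mem _
  exact (Submodule.isClosed_topologicalClosure _).mem_of_tendsto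
    (lp.hasSum_single ENNReal.ofNat_ne_top f)
    (Filter.Eventually.of_forall fun s => Submodule.sum_mem _ fun x _ => hsingle x)

lemma spanE_inter (A B : Set X) : spanE (A ∩ B) = spanE A ⊓ spanE B := by
  ext f
  simp only [Submodule.mem_inf, mem_spanE_iff, Set.mem_inter_iff]
  grind

lemma apply_eq_zero_of_mem_orthogonal_spanE {A : Set X} {f : lp (fun _ : X => ℂ) 2}
    (hf : f ∈ (spanE A)ᗮ) {x : X} (hx : x ∈ A) : f x = 0 := by
  rw [← inner_basisVec_left]
  exact Submodule.inner_right_of_mem_orthogonal (basisVec_mem_spanE hx) hf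

lemma spanE_union (A B : Set X) : spanE (A ∪ B) = spanE A ⊔ spanE B := by
  refine le_antisymm (fun f hf => ?_)
    (sup_le (spanE_mono Set.subset_union_left) (spanE_mono Set.subset_union_right))
  have : CompleteSpace (spanE A) := (Submodule.isClosed_topologicalClosure _).completeSpace_coe
  -- the `E_Aᗮ` component of `f` vanishes on `A` and, like `f`, outside `A ∪ B`
  have hf' : f ∈ spanE A ⊔ (spanE A)ᗮ := by
    rw [Submodule.sup_orthogonal_of_hasOrthogonalProjection]; trivial
  obtain ⟨a, ha, g, hg, rfl⟩ := Submodule.mem_sup.mp hf'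
  refine Submodule.add_mem_sup ha (mem_spanE_iff.mpr fun x hxB => ?_)
  by_cases hxA : x ∈ A
  · exact apply_eq_zero_of_mem_orthogonal_spanE hg hxA
  · have hx : x ∉ A ∪ B := by simp [hxA, hxB]
    have hsum : a x + g x = 0 := mem_spanE_iff.mp hf x hx
    rw [mem_spanE_iff.mp ha x hxA, zero_add] at hsum
    exact hsum

theorem stmt7_general (L : Submodule ℂ (lp (fun _ : X => ℂ) 2))
    (X₀' X₁' X₂' : Set X)
    (hpart : X₀' = X₁' ∪ X₂') (hdisj : Disjoint X₁' X₂') :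
    reduction L ∅ X₀' = reduction (reduction L ∅ X₁') ∅ X₂' := by
  have hE₂ : spanE X₂' ≤ spanE X₁'ᶜ := spanE_mono hdisj.symm.subset_compl_right
  calc reduction L ∅ X₀'
      = (L ⊔ spanE X₁' ⊔ spanE X₂') ⊓ (spanE X₁'ᶜ ⊓ spanE X₂'ᶜ) := by
        rw [reduction, hpart, Set.empty_union, spanE_union, Set.compl_union, spanE_inter,
          sup_assoc]
    _ = ((L ⊔ spanE X₁') ⊓ spanE X₁'ᶜ ⊔ spanE X₂') ⊓ spanE X₂'ᶜ := by
        rw [← inf_assoc, sup_comm _ (spanE X₂'), sup_comm _ (spanE X₂'),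
          sup_inf_assoc_of_le _ hE₂]
    _ = reduction (reduction L ∅ X₁') ∅ X₂' := by
        simp only [reduction, Set.empty_union]

/-- For a partition `X₀' = X₁' ⊔ X₂'`, `L_{∅,X₀'} = (L_{∅,X₁'})_{∅,X₂'}`. -/
theorem stmt7 (L : Submodule ℂ (lp (fun _ : X => ℂ) 2))
    (hL : IsClosed (L : Set (lp (fun _ : X => ℂ) 2)))
    (X₀' X₁' X₂' : Set X) (hfin : X₀'.Finite)
    (hpart : X₀' = X₁' ∪ X₂') (hdisj : Disjoint X₁' X₂') :
    reduction L ∅ X₀' = reduction (reduction L ∅ X₁') ∅ X₂' :=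
  stmt7_general L X₀' X₁' X₂' hpart hdisj

end
end

section
/- Let L be a closed subspace of a Hilbert space E, let a : E → E be a bounded invertible operator with bounded inverse, and suppose closed subspaces L_N converge to L (projections converge strongly). Assume a maps each L_N and L to closed subspaces and a L_N, aL are closed. If additionally (aL)^⊥ = (a*)⁻¹(L^⊥) and similarly for L_N, then aL_N → aL. -/
/-!
Split `x = y + z` with `y ∈ aL` and `z ∈ (aL)ᗮ`. Writing `y = a u` with `u ∈ L`, the projection of
`y` onto `aL_N` is its best approximation there, so it is at least as close to `y` as
`a (P_N u) → a u`. On the other hand `a† z ∈ Lᗮ`, so `P_N (a† z) → 0`; and if `Q_N z = a v` with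
`v ∈ L_N`, then `‖Q_N z‖² = ⟪v, P_N (a† z)⟫ ≤ ‖a⁻¹‖ ‖Q_N z‖ ‖P_N (a† z)‖`, so `Q_N z → 0` as well.
-/

open Filter Topology
open scoped InnerProductSpace NNReal

theorem ContinuousLinearMap.exists_eq_starProjection_of_range_eq {𝕜 E : Type*} [RCLike 𝕜]
    [NormedAddCommGroup E] [InnerProductSpace 𝕜 E] [CompleteSpace E] {P : E →L[𝕜] E}
    (hP : IsSelfAdjoint P) (hPi : P ∘L P = P) {K : Submodule 𝕜 E}
    (hK : LinearMap.range (P : E →ₗ[𝕜] E) = K) :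
    ∃ _ : K.HasOrthogonalProjection, P = K.starProjection := by
  subst hK
  exact isStarProjection_iff_eq_starProjection_range.mp ⟨hPi, hP⟩

namespace Submodule

variable {𝕜 E F ι : Type*} [RCLike 𝕜]
  [NormedAddCommGroup E] [InnerProductSpace 𝕜 E] [NormedAddCommGroup F] [InnerProductSpace 𝕜 F]
  {l : Filter ι}

theorem norm_sub_starProjection_le (U : Submodule 𝕜 E) [U.HasOrthogonalProjection] (y : E)
    {w : E} (hw : w ∈ U) : ‖y - U.starProjection y‖ ≤ ‖y - w‖ := by
  rw [starProjection_minimal]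
  exact ciInf_le ⟨0, Set.forall_mem_range.2 fun _ => norm_nonneg _⟩ (⟨w, hw⟩ : U)

theorem tendsto_starProjection_of_mem_of_mem_orthogonal (K : Submodule 𝕜 E)
    [K.HasOrthogonalProjection] (KN : ι → Submodule 𝕜 E) [∀ i, (KN i).HasOrthogonalProjection]
    (hK : ∀ y ∈ K, Tendsto (fun i => (KN i).starProjection y) l (𝓝 y))
    (hKperp : ∀ z ∈ Kᗮ, Tendsto (fun i => (KN i).starProjection z) l (𝓝 0)) (x : E) :
    Tendsto (fun i => (KN i).starProjection x) l (𝓝 (K.starProjection x)) := by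
  simpa [← map_add] using
    (hK _ (K.starProjection_apply_mem x)).add (hKperp _ (K.sub_starProjection_mem_orthogonal x))

theorem tendsto_starProjection_map_of_mem (T : E →L[𝕜] F) (L : Submodule 𝕜 E)
    [L.HasOrthogonalProjection] (LN : ι → Submodule 𝕜 E) [∀ i, (LN i).HasOrthogonalProjection]
    [∀ i, ((LN i).map (T : E →ₗ[𝕜] F)).HasOrthogonalProjection]
    (hconv : ∀ x, Tendsto (fun i => (LN i).starProjection x) l (𝓝 (L.starProjection x)))
    {y : F} (hy : y ∈ L.map (T : E →ₗ[𝕜] F)) :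
    Tendsto (fun i => ((LN i).map (T : E →ₗ[𝕜] F)).starProjection y) l (𝓝 y) := by
  obtain ⟨u, hu, rfl⟩ := hy
  have hTu : Tendsto (fun i => T ((LN i).starProjection u)) l (𝓝 (T u)) := by
    have h := (T.continuous.tendsto _).comp (hconv u)
    rwa [(starProjection_eq_self_iff (K := L)).2 hu] at h
  rw [tendsto_iff_norm_sub_tendsto_zero] at hTu ⊢
  refine squeeze_zero (fun _ => norm_nonneg _) (fun i => ?_) hTu
  rw [norm_sub_rev, norm_sub_rev (T _)]
  exact norm_sub_starProjection_le _ _ (mem_map_of_mem (starProjection_apply_mem _ u))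

variable [CompleteSpace E] [CompleteSpace F]

theorem norm_starProjection_map_le (T : E →L[𝕜] F) {K : ℝ≥0} (hT : AntilipschitzWith K T)
    (M : Submodule 𝕜 E) [M.HasOrthogonalProjection]
    [(M.map (T : E →ₗ[𝕜] F)).HasOrthogonalProjection] (z : F) :
    ‖(M.map (T : E →ₗ[𝕜] F)).starProjection z‖ ≤ K * ‖M.starProjection (T.adjoint z)‖ := by
  set w := (M.map (T : E →ₗ[𝕜] F)).starProjection z
  obtain ⟨u, hu, hw⟩ : w ∈ M.map (T : E →ₗ[𝕜] F) := starProjection_apply_mem _ z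
  have key : ‖w‖ ^ 2 ≤ K * ‖w‖ * ‖M.starProjection (T.adjoint z)‖ :=
    calc ‖w‖ ^ 2 = RCLike.re ⟪w, z⟫_𝕜 := by
          simp [w, re_inner_starProjection_eq_normSq]
      _ = RCLike.re ⟪u, M.starProjection (T.adjoint z)⟫_𝕜 := by
          rw [← inner_starProjection_left_eq_right, (starProjection_eq_self_iff (K := M)).2 hu,
            T.adjoint_inner_right, ← hw]; rfl
      _ ≤ ‖u‖ * ‖M.starProjection (T.adjoint z)‖ := re_inner_le_norm _ _
      _ ≤ K * ‖w‖ * ‖M.starProjection (T.adjoint z)‖ := by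
          gcongr; rw [← hw]; exact T.bound_of_antilipschitz hT u
  rcases (norm_nonneg w).eq_or_lt with h0 | hpos
  · rw [← h0]; positivity
  · exact le_of_mul_le_mul_left (by rw [← sq]; linarith [key]) hpos

theorem tendsto_starProjection_map (T : E →L[𝕜] F) {K : ℝ≥0} (hT : AntilipschitzWith K T)
    (L : Submodule 𝕜 E) [L.HasOrthogonalProjection] (LN : ι → Submodule 𝕜 E)
    [∀ i, (LN i).HasOrthogonalProjection] [(L.map (T : E →ₗ[𝕜] F)).HasOrthogonalProjection]
    [∀ i, ((LN i).map (T : E →ₗ[𝕜] F)).HasOrthogonalProjection]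
    (hconv : ∀ x, Tendsto (fun i => (LN i).starProjection x) l (𝓝 (L.starProjection x))) (x : F) :
    Tendsto (fun i => ((LN i).map (T : E →ₗ[𝕜] F)).starProjection x) l
      (𝓝 ((L.map (T : E →ₗ[𝕜] F)).starProjection x)) := by
  refine tendsto_starProjection_of_mem_of_mem_orthogonal _ _
    (fun y hy => tendsto_starProjection_map_of_mem T L LN hconv hy) (fun z hz => ?_) x
  have hz' : T.adjoint z ∈ Lᗮ := fun u hu => by
    rw [T.adjoint_inner_right]; exact hz _ (mem_map_of_mem hu)
  have hPz := hconv (T.adjoint z)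
  rw [(starProjection_apply_eq_zero_iff (K := L)).2 hz', tendsto_zero_iff_norm_tendsto_zero] at hPz
  rw [tendsto_zero_iff_norm_tendsto_zero]
  refine squeeze_zero (fun _ => norm_nonneg _) (fun i => norm_starProjection_map_le T hT _ z) ?_
  simpa using hPz.const_mul (K : ℝ)

end Submodule

theorem stmt12_general {E : Type*} [NormedAddCommGroup E] [InnerProductSpace ℂ E] [CompleteSpace E]
    (a : E ≃L[ℂ] E) (L : Submodule ℂ E) (LN : ℕ → Submodule ℂ E)
    (P : E →L[ℂ] E) (PN : ℕ → E →L[ℂ] E) (Q : E →L[ℂ] E) (QN : ℕ → E →L[ℂ] E)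
    (hP : IsSelfAdjoint P) (hPi : P ∘L P = P) (hPr : LinearMap.range (P : E →ₗ[ℂ] E) = L)
    (hPN : ∀ n, IsSelfAdjoint (PN n)) (hPNi : ∀ n, PN n ∘L PN n = PN n)
    (hPNr : ∀ n, LinearMap.range (PN n : E →ₗ[ℂ] E) = LN n)
    (hQ : IsSelfAdjoint Q) (hQi : Q ∘L Q = Q)
    (hQr : LinearMap.range (Q : E →ₗ[ℂ] E) = L.map ((a : E →L[ℂ] E) : E →ₗ[ℂ] E))
    (hQN : ∀ n, IsSelfAdjoint (QN n)) (hQNi : ∀ n, QN n ∘L QN n = QN n)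
    (hQNr : ∀ n, LinearMap.range (QN n : E →ₗ[ℂ] E) = (LN n).map ((a : E →L[ℂ] E) : E →ₗ[ℂ] E))
    (hconv : ∀ x : E, Tendsto (fun n => PN n x) atTop (nhds (P x))) :
    ∀ x : E, Tendsto (fun n => QN n x) atTop (nhds (Q x)) := by
  obtain ⟨_, rfl⟩ := ContinuousLinearMap.exists_eq_starProjection_of_range_eq hP hPi hPr
  obtain ⟨_, rfl⟩ := ContinuousLinearMap.exists_eq_starProjection_of_range_eq hQ hQi hQr
  choose _ hPN using fun n =>
    ContinuousLinearMap.exists_eq_starProjection_of_range_eq (hPN n) (hPNi n) (hPNr n)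
  choose _ hQN using fun n =>
    ContinuousLinearMap.exists_eq_starProjection_of_range_eq (hQN n) (hQNi n) (hQNr n)
  obtain rfl : PN = fun n => (LN n).starProjection := funext hPN
  obtain rfl : QN = fun n => ((LN n).map ((a : E →L[ℂ] E) : E →ₗ[ℂ] E)).starProjection :=
    funext hQN
  exact Submodule.tendsto_starProjection_map _ a.antilipschitz L LN hconv

/-- If closed subspaces `L_N` converge to `L` (strong convergence of orthogonal
projections) and `a` is a bounded invertible operator with bounded inverse whose images
`aL_N`, `aL` are closed and satisfy `(aL)^⊥ = (a*)⁻¹(L^⊥)` (and likewise for the `L_N`),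
then `aL_N → aL`. -/
theorem stmt12 {E : Type*} [NormedAddCommGroup E] [InnerProductSpace ℂ E] [CompleteSpace E]
    (a : E ≃L[ℂ] E) (L : Submodule ℂ E) (LN : ℕ → Submodule ℂ E)
    (hL : IsClosed (L : Set E)) (hLN : ∀ n, IsClosed ((LN n : Submodule ℂ E) : Set E))
    (haL : IsClosed ((L.map ((a : E →L[ℂ] E) : E →ₗ[ℂ] E) : Submodule ℂ E) : Set E))
    (haLN : ∀ n, IsClosed (((LN n).map ((a : E →L[ℂ] E) : E →ₗ[ℂ] E) : Submodule ℂ E) : Set E))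
    (P : E →L[ℂ] E) (PN : ℕ → E →L[ℂ] E) (Q : E →L[ℂ] E) (QN : ℕ → E →L[ℂ] E)
    (hP : IsSelfAdjoint P) (hPi : P ∘L P = P) (hPr : LinearMap.range (P : E →ₗ[ℂ] E) = L)
    (hPN : ∀ n, IsSelfAdjoint (PN n)) (hPNi : ∀ n, PN n ∘L PN n = PN n)
    (hPNr : ∀ n, LinearMap.range (PN n : E →ₗ[ℂ] E) = LN n)
    (hQ : IsSelfAdjoint Q) (hQi : Q ∘L Q = Q)
    (hQr : LinearMap.range (Q : E →ₗ[ℂ] E) = L.map ((a : E →L[ℂ] E) : E →ₗ[ℂ] E))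
    (hQN : ∀ n, IsSelfAdjoint (QN n)) (hQNi : ∀ n, QN n ∘L QN n = QN n)
    (hQNr : ∀ n, LinearMap.range (QN n : E →ₗ[ℂ] E) = (LN n).map ((a : E →L[ℂ] E) : E →ₗ[ℂ] E))
    (hadj : (L.map ((a : E →L[ℂ] E) : E →ₗ[ℂ] E))ᗮ
      = Lᗮ.comap ((ContinuousLinearMap.adjoint (a : E →L[ℂ] E)) : E →ₗ[ℂ] E))
    (hadjN : ∀ n, ((LN n).map ((a : E →L[ℂ] E) : E →ₗ[ℂ] E))ᗮ
      = (LN n)ᗮ.comap ((ContinuousLinearMap.adjoint (a : E →L[ℂ] E)) : E →ₗ[ℂ] E))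
    (hconv : ∀ x : E, Tendsto (fun n => PN n x) atTop (nhds (P x))) :
    ∀ x : E, Tendsto (fun n => QN n x) atTop (nhds (Q x)) :=
  stmt12_general a L LN P PN Q QN hP hPi hPr hPN hPNi hPNr hQ hQi hQr hQN hQNi hQNr hconv
end

section
/- Let K be an orthogonal projection on ℓ²(X) and b ∈ ℓ¹(X) a summable function. Then the operator bK (multiplication by b composed with K) is trace class, and its trace tr(bK) = Σ_x b(x) K(x,x) depends continuously on K in the weak operator topology on the set of projections: if K_n → K weakly then tr(bK_n) → tr(bK). -/
/-! The diagonal entries of a bounded operator `L` on `ℓ²(X)` are bounded by `‖L‖`, and an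
orthogonal projection has norm at most `1`. Hence `|b(x) K(x,x)| ≤ ‖K‖ |b(x)|` is summable, and the
weakly convergent projections `K_n` have diagonal terms `b(x) K_n(x,x)` dominated by `|b(x)|`, so
the traces converge by dominated convergence for series. -/

open Filter
open scoped ComplexInnerProductSpace

noncomputable section

variable {X : Type*} [DecidableEq X]

lemma norm_basisVec (x : X) : ‖basisVec x‖ = 1 := by
  simp [basisVec, lp.norm_single]

lemma norm_inner_apply_self_le {𝕜 E : Type*} [RCLike 𝕜] [NormedAddCommGroup E]
    [InnerProductSpace 𝕜 E] (L : E →L[𝕜] E) (v : E) :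
    ‖inner 𝕜 v (L v)‖ ≤ ‖L‖ * ‖v‖ ^ 2 :=
  calc ‖inner 𝕜 v (L v)‖ ≤ ‖v‖ * ‖L v‖ := norm_inner_le_norm v (L v)
    _ ≤ ‖v‖ * (‖L‖ * ‖v‖) := by gcongr; exact L.le_opNorm v
    _ = ‖L‖ * ‖v‖ ^ 2 := by ring

lemma norm_mul_inner_basisVec_apply_le (b : X → ℂ)
    (L : lp (fun _ : X => ℂ) 2 →L[ℂ] lp (fun _ : X => ℂ) 2) (x : X) :
    ‖b x * ⟪basisVec x, L (basisVec x)⟫‖ ≤ ‖b x‖ * ‖L‖ := by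
  rw [norm_mul]
  gcongr
  simpa [norm_basisVec] using norm_inner_apply_self_le L (basisVec x)

theorem stmt14_general (b : X → ℂ) (hb : Summable fun x => ‖b x‖)
    (K : lp (fun _ : X => ℂ) 2 →L[ℂ] lp (fun _ : X => ℂ) 2)
    (Kn : ℕ → lp (fun _ : X => ℂ) 2 →L[ℂ] lp (fun _ : X => ℂ) 2)
    (hKn : ∀ n, IsSelfAdjoint (Kn n)) (hKni : ∀ n, Kn n ∘L Kn n = Kn n)
    (hwot : ∀ u v : lp (fun _ : X => ℂ) 2,
      Tendsto (fun n => ⟪u, Kn n v⟫) atTop (nhds ⟪u, K v⟫)) :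
    Summable (fun x => ‖b x * ⟪basisVec x, K (basisVec x)⟫‖) ∧
    Tendsto (fun n => ∑' x : X, b x * ⟪basisVec x, Kn n (basisVec x)⟫) atTop
      (nhds (∑' x : X, b x * ⟪basisVec x, K (basisVec x)⟫)) := by
  have hKn_norm (n : ℕ) : ‖Kn n‖ ≤ 1 := IsStarProjection.norm_le _ ⟨hKni n, hKn n⟩
  refine ⟨.of_nonneg_of_le (fun _ => norm_nonneg _)
    (norm_mul_inner_basisVec_apply_le b K) (hb.mul_right ‖K‖), ?_⟩
  refine tendsto_tsum_of_dominated_convergence hb (fun x => (hwot _ _).const_mul (b x)) ?_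
  exact .of_forall fun n x => (norm_mul_inner_basisVec_apply_le b (Kn n) x).trans
    (mul_le_of_le_one_right (norm_nonneg _) (hKn_norm n))

/-- For `b ∈ ℓ¹(X)` and an orthogonal projection `K` on `ℓ²(X)`, the diagonal series
`tr(bK) = Σ_x b(x) K(x,x)` converges absolutely (`bK` is trace class), and the trace
depends continuously on `K` in the weak operator topology on the set of projections. -/
theorem stmt14 (b : X → ℂ) (hb : Summable fun x => ‖b x‖)
    (K : lp (fun _ : X => ℂ) 2 →L[ℂ] lp (fun _ : X => ℂ) 2)
    (hK : IsSelfAdjoint K) (hKi : K ∘L K = K)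
    (Kn : ℕ → lp (fun _ : X => ℂ) 2 →L[ℂ] lp (fun _ : X => ℂ) 2)
    (hKn : ∀ n, IsSelfAdjoint (Kn n)) (hKni : ∀ n, Kn n ∘L Kn n = Kn n)
    (hwot : ∀ u v : lp (fun _ : X => ℂ) 2,
      Tendsto (fun n => ⟪u, Kn n v⟫) atTop (nhds ⟪u, K v⟫)) :
    Summable (fun x => ‖b x * ⟪basisVec x, K (basisVec x)⟫‖) ∧
    Tendsto (fun n => ∑' x : X, b x * ⟪basisVec x, Kn n (basisVec x)⟫) atTop
      (nhds (∑' x : X, b x * ⟪basisVec x, K (basisVec x)⟫)) :=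
  stmt14_general b hb K Kn hKn hKni hwot

end
end
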